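/- arXiv:2410.14133 — 2 statements merged into one kernel-verified Lean document; each statement's English description precedes it below -/
import Mathlib

section
/- Let δ be a constant with 1/(3e) ≤ δ < 1/3 and let N' > 1 be a real number. Set M = ⌊(1 − 3δ)·(log N')/(log 2)⌋, and for each integer 0 ≤ m ≤ M set N'_m = N'/2^m and C_{δ,m} = ∫_{δ·(log N')/(log N'_m)}^{1/3} log(2 − 3t)/(t(1 − t)) dt. Let S = ∑_{m=0}^{M} C_{δ,m}·N'_m / log N'_m and T = C_{δ,0}·N' / log N'. Then S ≤ 2·(1 − 1/2^{M+1})·T. -/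
open Real MeasureTheory intervalIntegral

lemma chi_nonneg {a : ℝ} (h1 : 1 ≤ a) (h2 : a ≤ 2 - (Real.exp 1)⁻¹) :
    1 + a * Real.log a - a ≤ (Real.exp 1)⁻¹ * Real.log a := by
  set A : ℝ := 2 - (Real.exp 1)⁻¹ with hA
  have hE : (2.7182818283 : ℝ) < Real.exp 1 := Real.exp_one_gt_d9
  have hEpos : (0:ℝ) < Real.exp 1 := Real.exp_pos 1
  have hEinv : (Real.exp 1)⁻¹ < 1 := by
    rw [inv_lt_one_iff₀]; right; linarith
  have hEinv0 : (0:ℝ) < (Real.exp 1)⁻¹ := by positivity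
  have hA1 : (1:ℝ) < A := by rw [hA]; linarith
  -- χ is concave on [1, A]
  have hsub : Set.Icc (1:ℝ) A ⊆ Set.Ici (0:ℝ) := fun x hx => le_trans zero_le_one hx.1
  have hsub' : Set.Icc (1:ℝ) A ⊆ Set.Ioi (0:ℝ) := fun x hx => lt_of_lt_of_le zero_lt_one hx.1
  have hconv : Convex ℝ (Set.Icc (1:ℝ) A) := convex_Icc _ _
  have hconc1 : ConcaveOn ℝ (Set.Icc (1:ℝ) A) (fun x => (Real.exp 1)⁻¹ * Real.log x) := by
    have := (strictConcaveOn_log_Ioi.concaveOn.subset hsub' hconv).smul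
      (c := (Real.exp 1)⁻¹) (le_of_lt hEinv0)
    simpa [smul_eq_mul] using this
  have haff : ConcaveOn ℝ (Set.Icc (1:ℝ) A) (fun x : ℝ => x - 1) := by
    have := (concaveOn_id hconv).add_const (-1 : ℝ)
    exact this.congr (fun x _ => by simp [sub_eq_add_neg])
  have hconvx : ConvexOn ℝ (Set.Icc (1:ℝ) A) (fun x : ℝ => x * Real.log x) :=
    Real.convexOn_mul_log.subset hsub hconv
  have hchi : ConcaveOn ℝ (Set.Icc (1:ℝ) A)
      (fun x => ((Real.exp 1)⁻¹ * Real.log x + (x - 1)) - x * Real.log x) :=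
    ((hconc1.add haff).sub hconvx).congr (fun x _ => rfl) |>.subset (le_refl _) hconv
  set χ : ℝ → ℝ := fun x => ((Real.exp 1)⁻¹ * Real.log x + (x - 1)) - x * Real.log x with hχ
  -- endpoint values
  have hlogA : Real.log A ≤ 1/2 := by
    have hApos : (0:ℝ) < A := by linarith
    rw [Real.log_le_iff_le_exp hApos]
    have h2 : Real.exp (1/2) ^ 2 = Real.exp 1 := by
      rw [← Real.exp_nat_mul]; norm_num
    have hx2 : (0.3678:ℝ) < (Real.exp 1)⁻¹ := by
      have hE' : Real.exp 1 < 2.7182818286 := Real.exp_one_lt_d9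
      rw [lt_inv_comm₀ (by norm_num) hEpos]
      nlinarith
    have hA2 : A < 1.6322 := by rw [hA]; linarith
    nlinarith [h2, Real.exp_pos (1/2 : ℝ), hA2, hApos]
  have hlogA0 : 0 ≤ Real.log A := Real.log_nonneg (le_of_lt hA1)
  have hχA : 0 ≤ χ A := by
    have : χ A = (A - 1) - (A - (Real.exp 1)⁻¹) * Real.log A := by rw [hχ]; ring
    rw [this]
    have h3 : (A - (Real.exp 1)⁻¹) * Real.log A ≤ (A - (Real.exp 1)⁻¹) * (1/2) := by
      apply mul_le_mul_of_nonneg_left hlogA; rw [hA]; linarith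
    rw [hA]; rw [hA] at h3; nlinarith
  have hχ1 : χ 1 = 0 := by simp [hχ]
  -- convex combination
  rcases eq_or_lt_of_le h1 with rfl | h1'
  · simp
  · set θ : ℝ := (A - a)/(A - 1) with hθ
    have hA1' : (0:ℝ) < A - 1 := by linarith
    have hθ0 : 0 ≤ θ := by apply div_nonneg <;> linarith
    have hθ1 : 0 ≤ 1 - θ := by
      rw [hθ, sub_nonneg, div_le_one hA1']; linarith
    have hsum : θ + (1 - θ) = 1 := by ring
    have hcomb := hchi.2 (Set.mem_Icc.2 ⟨le_refl 1, le_of_lt hA1⟩)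
      (Set.mem_Icc.2 ⟨le_of_lt hA1, le_refl A⟩) hθ0 hθ1 hsum
    have hpt : θ • (1:ℝ) + (1 - θ) • A = a := by
      rw [smul_eq_mul, smul_eq_mul, hθ]; field_simp; ring
    rw [hpt, hχ1, smul_zero, zero_add, smul_eq_mul] at hcomb
    have : 0 ≤ χ a := le_trans (mul_nonneg hθ1 hχA) hcomb
    rw [hχ] at this; dsimp at this; linarith

lemma intf {a b : ℝ} (ha : 0 < a) (hab : a ≤ b) (hb : b ≤ 1/3) :
    IntervalIntegrable (fun t => Real.log (2 - 3*t) / (t * (1 - t))) volume a b := by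
  apply ContinuousOn.intervalIntegrable
  rw [Set.uIcc_of_le hab]
  apply ContinuousOn.div
  · apply ContinuousOn.log
    · fun_prop
    · intro t ht
      have h1 := ht.1; have h2 := ht.2
      nlinarith
  · fun_prop
  · intro t ht
    have h1 := ht.1; have h2 := ht.2
    have : 0 < t * (1 - t) := by nlinarith
    exact ne_of_gt this

lemma int_log_two_sub {u : ℝ} (hu2 : u ≤ 1/3) :
    ∫ t in u..(1/3:ℝ), Real.log (2 - 3*t)
      = (1 + (2-3*u) * Real.log (2-3*u) - (2-3*u)) / 3 := by
  have key : ∀ t ∈ Set.uIcc u (1/3:ℝ),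
      HasDerivAt (fun s => (-(1/3:ℝ)) * ((2-3*s) * (Real.log (2-3*s) - 1)))
        (Real.log (2-3*t)) t := by
    intro t ht
    rw [Set.uIcc_of_le hu2] at ht
    have h0 : (0:ℝ) < 2 - 3*t := by have := ht.2; linarith
    have hd : HasDerivAt (fun s : ℝ => 2 - 3*s) (-3) t := by
      simpa using ((hasDerivAt_id t).const_mul (3:ℝ)).const_sub 2
    have hlog : HasDerivAt (fun s : ℝ => Real.log (2-3*s)) (-3/(2-3*t)) t :=
      hd.log (ne_of_gt h0)
    have := (hd.mul (hlog.sub_const 1)).const_mul (-(1/3:ℝ))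
    refine this.congr_deriv ?_
    have e : (2-3*t) * (-3/(2-3*t)) = -3 := by field_simp
    linear_combination (-1/3:ℝ) * e
  have hint : IntervalIntegrable (fun t => Real.log (2 - 3*t)) volume u (1/3:ℝ) := by
    apply ContinuousOn.intervalIntegrable
    apply ContinuousOn.log
    · fun_prop
    · intro t ht
      rw [Set.uIcc_of_le hu2] at ht
      have := ht.2; intro h; nlinarith [ht.2]
  have := intervalIntegral.integral_eq_sub_of_hasDerivAt key hint
  rw [this]
  norm_num
  ring

lemma g_le {δ u : ℝ} (hδ : 1/(3*Real.exp 1) ≤ δ) (hu1 : δ ≤ u) (hu2 : u ≤ 1/3) :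
    ∫ t in u..(1/3:ℝ), Real.log (2-3*t) / (t*(1-t))
      ≤ δ * (Real.log (2-3*u) / (u*(1-u))) := by
  have hEpos : (0:ℝ) < Real.exp 1 := Real.exp_pos 1
  have hδ0 : 0 < δ := lt_of_lt_of_le (by positivity) hδ
  have hu0 : 0 < u := lt_of_lt_of_le hδ0 hu1
  have hden : 0 < u * (1-u) := by nlinarith
  -- step 1 : compare with log(2-3t) * (u(1-u))⁻¹
  have step1 : ∫ t in u..(1/3:ℝ), Real.log (2-3*t) / (t*(1-t))
      ≤ ∫ t in u..(1/3:ℝ), Real.log (2-3*t) * (u*(1-u))⁻¹ := by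
    apply intervalIntegral.integral_mono_on hu2 (intf hu0 hu2 (le_refl _))
    · apply ContinuousOn.intervalIntegrable
      apply ContinuousOn.mul _ continuousOn_const
      apply ContinuousOn.log
      · fun_prop
      · intro t ht
        rw [Set.uIcc_of_le hu2] at ht
        intro h; nlinarith [ht.2]
    · intro t ht
      have ht1 := ht.1; have ht2 := ht.2
      rw [← div_eq_mul_inv]
      have hl0 : 0 ≤ Real.log (2-3*t) := Real.log_nonneg (by linarith)
      have hmono : u * (1-u) ≤ t * (1-t) := by nlinarith
      exact div_le_div_of_nonneg_left hl0 hden hmono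
  -- step 2 : compute the upper integral
  have step2 : ∫ t in u..(1/3:ℝ), Real.log (2-3*t) * (u*(1-u))⁻¹
      = ((1 + (2-3*u) * Real.log (2-3*u) - (2-3*u)) / 3) * (u*(1-u))⁻¹ := by
    rw [intervalIntegral.integral_mul_const, int_log_two_sub hu2]
  -- step 3 : chi inequality
  have ha1 : (1:ℝ) ≤ 2 - 3*u := by linarith
  have ha2 : 2 - 3*u ≤ 2 - (Real.exp 1)⁻¹ := by
    have h3δ : (Real.exp 1)⁻¹ ≤ 3 * δ := by
      rw [inv_eq_one_div, div_le_iff₀ hEpos]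
      rw [div_le_iff₀ (by positivity : (0:ℝ) < 3 * Real.exp 1)] at hδ
      nlinarith
    linarith
  have hchi := chi_nonneg ha1 ha2
  have h3δ' : (Real.exp 1)⁻¹ * Real.log (2-3*u) ≤ 3 * δ * Real.log (2-3*u) := by
    apply mul_le_mul_of_nonneg_right _ (Real.log_nonneg ha1)
    rw [inv_eq_one_div, div_le_iff₀ hEpos]
    rw [div_le_iff₀ (by positivity : (0:ℝ) < 3 * Real.exp 1)] at hδ
    nlinarith
  have step3 : (1 + (2-3*u) * Real.log (2-3*u) - (2-3*u)) / 3 ≤ δ * Real.log (2-3*u) := by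
    rw [div_le_iff₀ (by norm_num : (0:ℝ) < 3)]
    calc 1 + (2-3*u) * Real.log (2-3*u) - (2-3*u)
        ≤ (Real.exp 1)⁻¹ * Real.log (2-3*u) := hchi
      _ ≤ 3 * δ * Real.log (2-3*u) := h3δ'
      _ = δ * Real.log (2-3*u) * 3 := by ring
  calc ∫ t in u..(1/3:ℝ), Real.log (2-3*t) / (t*(1-t))
      ≤ ((1 + (2-3*u) * Real.log (2-3*u) - (2-3*u)) / 3) * (u*(1-u))⁻¹ := by
        rw [← step2]; exact step1
    _ ≤ (δ * Real.log (2-3*u)) * (u*(1-u))⁻¹ := by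
        apply mul_le_mul_of_nonneg_right step3 (le_of_lt (inv_pos.2 hden))
    _ = δ * (Real.log (2-3*u) / (u*(1-u))) := by rw [div_eq_mul_inv]; ring

lemma lower_int {δ u : ℝ} (hδ0 : 0 < δ) (hu1 : δ ≤ u) (hu2 : u ≤ 1/3) :
    (u - δ) * (Real.log (2-3*u) / (u*(1-u)))
      ≤ ∫ t in δ..u, Real.log (2-3*t) / (t*(1-t)) := by
  have hu0 : 0 < u := lt_of_lt_of_le hδ0 hu1
  have hconst : ∫ _t in δ..u, (Real.log (2-3*u) / (u*(1-u)))
      = (u - δ) * (Real.log (2-3*u) / (u*(1-u))) := by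
    rw [intervalIntegral.integral_const, smul_eq_mul]
  rw [← hconst]
  apply intervalIntegral.integral_mono_on hu1 intervalIntegrable_const
    (intf hδ0 hu1 hu2)
  intro t ht
  have ht1 := ht.1; have ht2 := ht.2
  have ht0 : 0 < t := lt_of_lt_of_le hδ0 ht1
  have htden : 0 < t * (1-t) := by nlinarith
  have hl0 : 0 ≤ Real.log (2-3*u) := Real.log_nonneg (by linarith)
  have hmono : t * (1-t) ≤ u * (1-u) := by nlinarith
  have hnum : Real.log (2-3*u) ≤ Real.log (2-3*t) := by
    apply Real.log_le_log (by linarith) (by linarith)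
  calc Real.log (2-3*u) / (u*(1-u)) ≤ Real.log (2-3*u) / (t*(1-t)) :=
        div_le_div_of_nonneg_left hl0 htden hmono
    _ ≤ Real.log (2-3*t) / (t*(1-t)) := by
        gcongr

theorem stmt8 (δ N' : ℝ) (hδ1 : 1 / (3 * Real.exp 1) ≤ δ) (hδ2 : δ < 1 / 3)
    (hN' : 1 < N')
    (M : ℕ) (hM : M = ⌊(1 - 3 * δ) * Real.log N' / Real.log 2⌋₊) :
    ∑ m ∈ Finset.range (M + 1),
      (∫ t in (δ * Real.log N' / Real.log (N' / 2 ^ m))..(1 / 3 : ℝ),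
          Real.log (2 - 3 * t) / (t * (1 - t))) *
        (N' / 2 ^ m) / Real.log (N' / 2 ^ m)
    ≤ 2 * (1 - 1 / 2 ^ (M + 1)) *
      ((∫ t in δ..(1 / 3 : ℝ), Real.log (2 - 3 * t) / (t * (1 - t))) *
        N' / Real.log N') := by
  have hEpos : (0:ℝ) < Real.exp 1 := Real.exp_pos 1
  have hδ0 : 0 < δ := lt_of_lt_of_le (by positivity) hδ1
  have hN0 : (0:ℝ) < N' := lt_trans zero_lt_one hN'
  have hL : 0 < Real.log N' := Real.log_pos hN'
  have hlog2 : 0 < Real.log 2 := Real.log_pos (by norm_num)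
  set L := Real.log N' with hLdef
  set C0 := ∫ t in δ..(1/3:ℝ), Real.log (2 - 3*t) / (t * (1-t)) with hC0
  have key : ∀ m ∈ Finset.range (M+1),
      (∫ t in (δ * L / Real.log (N' / 2 ^ m))..(1/3:ℝ),
          Real.log (2 - 3*t) / (t * (1-t))) * (N' / 2 ^ m) / Real.log (N' / 2 ^ m)
      ≤ (1/2:ℝ)^m * (C0 * N' / L) := by
    intro m hm
    rw [Finset.mem_range] at hm
    have hm' : (m:ℝ) * Real.log 2 ≤ (1 - 3*δ) * L := by
      have h1 : (m:ℝ) ≤ (M:ℝ) := by exact_mod_cast Nat.lt_succ_iff.mp hm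
      have h2 : (M:ℝ) ≤ (1 - 3*δ) * L / Real.log 2 := by
        rw [hM]
        exact Nat.floor_le (div_nonneg (mul_nonneg (by linarith) hL.le) hlog2.le)
      have h3 := h1.trans h2
      rw [le_div_iff₀ hlog2] at h3
      linarith
    set Lm := Real.log (N'/2^m) with hLm
    have hLmeq : Lm = L - m * Real.log 2 := by
      rw [hLm, Real.log_div (ne_of_gt hN0) (by positivity), Real.log_pow, hLdef]
    have hLm1 : 3*δ*L ≤ Lm := by rw [hLmeq]; linarith
    have hLm0 : 0 < Lm := lt_of_lt_of_le (by nlinarith) hLm1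
    have hmlog : 0 ≤ (m:ℝ) * Real.log 2 := by positivity
    have hLmle : Lm ≤ L := by rw [hLmeq]; linarith
    set u := δ * L / Lm with hu
    have hu1 : δ ≤ u := by
      rw [hu, le_div_iff₀ hLm0]
      nlinarith
    have hu2 : u ≤ 1/3 := by
      rw [hu, div_le_iff₀ hLm0]
      linarith
    have huLm : u * Lm = δ * L := by
      rw [hu]; field_simp
    have hu0 : 0 < u := lt_of_lt_of_le hδ0 hu1
    set Cm := ∫ t in u..(1/3:ℝ), Real.log (2 - 3*t) / (t * (1-t)) with hCm
    set I1 := ∫ t in δ..u, Real.log (2 - 3*t) / (t * (1-t)) with hI1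
    have hsplit : I1 + Cm = C0 :=
      intervalIntegral.integral_add_adjacent_intervals (intf hδ0 hu1 hu2)
        (intf hu0 hu2 (le_refl _))
    set fu := Real.log (2-3*u) / (u*(1-u)) with hfu
    have hfu0 : 0 ≤ fu := by
      apply div_nonneg (Real.log_nonneg (by linarith))
      nlinarith
    have hkey1 : Cm ≤ δ * fu := g_le hδ1 hu1 hu2
    have hkey2 : (u - δ) * fu ≤ I1 := lower_int hδ0 hu1 hu2
    have hCL : Cm * L ≤ C0 * Lm := by
      rw [← hsplit]
      have e1 : Cm * (L - Lm) ≤ δ * fu * (L - Lm) :=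
        mul_le_mul_of_nonneg_right hkey1 (by linarith)
      have e2 : (u - δ) * fu * Lm ≤ I1 * Lm :=
        mul_le_mul_of_nonneg_right hkey2 hLm0.le
      have e3 : fu * (u * Lm) = fu * (δ * L) := by rw [huLm]
      nlinarith [e1, e2, e3]
    have h2m : (0:ℝ) < 2^m := by positivity
    calc Cm * (N'/2^m) / Lm = (Cm * L) * (N' / (2^m * L * Lm)) := by
          field_simp
      _ ≤ (C0 * Lm) * (N' / (2^m * L * Lm)) :=
          mul_le_mul_of_nonneg_right hCL (by positivity)
      _ = (1/2:ℝ)^m * (C0 * N' / L) := by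
          field_simp; rw [one_div, inv_pow, mul_assoc, mul_inv_cancel₀ h2m.ne', mul_one]
  calc ∑ m ∈ Finset.range (M+1),
      (∫ t in (δ * L / Real.log (N' / 2 ^ m))..(1/3:ℝ),
          Real.log (2 - 3*t) / (t * (1-t))) * (N' / 2 ^ m) / Real.log (N' / 2 ^ m)
      ≤ ∑ m ∈ Finset.range (M+1), (1/2:ℝ)^m * (C0 * N' / L) :=
        Finset.sum_le_sum key
    _ = (∑ m ∈ Finset.range (M+1), (1/2:ℝ)^m) * (C0 * N' / L) := by
        rw [Finset.sum_mul]
    _ = 2 * (1 - 1/2^(M+1)) * (C0 * N' / L) := by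
        rw [geom_sum_eq (by norm_num : (1/2:ℝ) ≠ 1)]
        have : (1/2:ℝ)^(M+1) = 1/2^(M+1) := by
          rw [div_pow, one_pow]
        rw [this]
        have h2 : (0:ℝ) < 2^(M+1) := by positivity
        field_simp
        ring
end

section
/- Let δ be a constant with 1/(3e) ≤ δ < 1/3, define f(t) = log(2 − 3t)/(t(1 − t)) and, for x ≥ 1, I(x) = ∫_{xδ}^{1/3} f(t) dt. Then for every x with 1 ≤ x ≤ 1/(3δ), one has x·I(x) ≤ I(1). -/
open Real intervalIntegral Set

noncomputable def fn (t : ℝ) : ℝ := Real.log (2 - 3 * t) / (t * (1 - t))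

lemma fn_contAt {t : ℝ} (h0 : 0 < t) (h1 : t < 2/3) : ContinuousAt fn t := by
  unfold fn
  apply ContinuousAt.div
  · exact (Real.continuousAt_log (by nlinarith)).comp (by fun_prop)
  · fun_prop
  · nlinarith

lemma fn_contOn {s : Set ℝ} (hs : s ⊆ Set.Ioo 0 (2/3)) : ContinuousOn fn s :=
  fun t ht => (fn_contAt (hs ht).1 (hs ht).2).continuousWithinAt

lemma fn_integrable {a b : ℝ} (ha : 0 < a) (hab : a ≤ b) (hb : b < 2/3) :
    IntervalIntegrable fn MeasureTheory.volume a b := by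
  apply (fn_contOn ?_).intervalIntegrable
  rw [Set.uIcc_of_le hab]
  exact fun t ht => ⟨lt_of_lt_of_le ha ht.1, lt_of_le_of_lt ht.2 hb⟩

lemma log_integral {a : ℝ} (ha3 : a ≤ 1/3) :
    ∫ t in a..(1/3:ℝ), Real.log (2 - 3*t)
      = ((2 - 3*a) * Real.log (2 - 3*a) - (1 - 3*a)) / 3 := by
  have hderiv : ∀ t ∈ Set.uIcc a (1/3:ℝ),
      HasDerivAt (fun u => -((2-3*u) * (Real.log (2-3*u) - 1))/3) (Real.log (2-3*t)) t := by
    intro t ht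
    rw [Set.uIcc_of_le ha3] at ht
    have hpos : (0:ℝ) < 2 - 3*t := by nlinarith [ht.2]
    have h1 : HasDerivAt (fun u : ℝ => 2 - 3*u) (-3) t := by
      simpa using ((hasDerivAt_id t).const_mul 3).const_sub 2
    have h2 : HasDerivAt (fun u : ℝ => Real.log (2-3*u)) ((2-3*t)⁻¹ * (-3)) t :=
      by have := (Real.hasDerivAt_log (ne_of_gt hpos)).comp t h1; exact this
    have h3 := (h1.mul (h2.sub_const 1)).neg.div_const 3
    refine h3.congr_deriv ?_
    field_simp [hpos.ne']
    ring
  rw [intervalIntegral.integral_eq_sub_of_hasDerivAt hderiv ?_]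
  · have h13 : Real.log (2 - 3*(1/3:ℝ)) = 0 := by norm_num
    norm_num
    ring
  · apply ContinuousOn.intervalIntegrable
    apply ContinuousOn.log
    · fun_prop
    · intro t ht
      rw [Set.uIcc_of_le ha3] at ht
      nlinarith [ht.2]

lemma log_le_half {a : ℝ} (ha : 1/(3*Real.exp 1) ≤ a) (ha3 : a ≤ 1/3) :
    Real.log (2 - 3*a) ≤ 1/2 := by
  have hE : (2.7182818283 : ℝ) < Real.exp 1 := Real.exp_one_gt_d9
  have hEpos : (0:ℝ) < Real.exp 1 := Real.exp_pos 1
  have hs : (0:ℝ) < Real.exp (1/2) := Real.exp_pos _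
  have hs2 : Real.exp (1/2) * Real.exp (1/2) = Real.exp 1 := by
    rw [← Real.exp_add]; norm_num
  have h3a : 1 / Real.exp 1 ≤ 3 * a := by
    rw [div_le_iff₀ hEpos]
    rw [div_le_iff₀ (by positivity)] at ha
    nlinarith
  have hle : 2 - 3*a ≤ Real.exp (1/2) := by
    have h1 : 1 / Real.exp 1 > 0.3678 := by
      rw [gt_iff_lt, lt_div_iff₀ hEpos]
      nlinarith [Real.exp_one_lt_d9]
    have h2 : Real.exp (1/2) > 1.6487 := by nlinarith [hs, hs2, hE]
    linarith
  calc Real.log (2 - 3*a) ≤ Real.log (Real.exp (1/2)) := by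
        apply Real.log_le_log (by nlinarith) hle
    _ = 1/2 := Real.log_exp _

lemma key {a : ℝ} (ha : 1/(3*Real.exp 1) ≤ a) (ha3 : a ≤ 1/3) :
    ∫ t in a..(1/3:ℝ), fn t ≤ Real.log (2-3*a) / (1-a) := by
  have hEpos : (0:ℝ) < Real.exp 1 := Real.exp_pos 1
  have ha0 : 0 < a := lt_of_lt_of_le (by positivity) ha
  set L := Real.log (2-3*a) with hL
  have hL0 : 0 ≤ L := Real.log_nonneg (by nlinarith)
  have hLh : L ≤ 1/2 := log_le_half ha ha3
  have hden : 0 < a * (1-a) := by nlinarith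
  -- step 1 : pointwise bound
  have step1 : ∫ t in a..(1/3:ℝ), fn t
      ≤ ∫ t in a..(1/3:ℝ), Real.log (2 - 3*t) / (a * (1-a)) := by
    apply intervalIntegral.integral_mono_on ha3 (fn_integrable ha0 ha3 (by norm_num))
    · apply IntervalIntegrable.div_const
      apply ContinuousOn.intervalIntegrable
      apply ContinuousOn.log
      · fun_prop
      · intro t ht
        rw [Set.uIcc_of_le ha3] at ht
        nlinarith [ht.2]
    · intro t ht
      unfold fn
      have hlog : 0 ≤ Real.log (2 - 3*t) := Real.log_nonneg (by nlinarith [ht.2])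
      have hdt : a * (1-a) ≤ t * (1-t) := by nlinarith [ht.1, ht.2]
      exact div_le_div_of_nonneg_left hlog hden hdt
  have step2 : ∫ t in a..(1/3:ℝ), Real.log (2 - 3*t) / (a * (1-a))
      = (((2 - 3*a) * L - (1 - 3*a)) / 3) / (a * (1-a)) := by
    rw [intervalIntegral.integral_div, log_integral ha3]
  rw [step2] at step1
  refine step1.trans ?_
  rw [div_le_div_iff₀ (by positivity) (by nlinarith)]
  have h13a : 0 ≤ 1 - 3*a := by linarith
  nlinarith [mul_nonneg (mul_nonneg (show (0:ℝ) ≤ 1-a by linarith) h13a)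
    (show (0:ℝ) ≤ 1 - 2*L by linarith)]

lemma F_hasDeriv {a : ℝ} (ha : 1/(3*Real.exp 1) ≤ a) (ha3 : a ≤ 1/3) :
    HasDerivAt (fun u => ∫ t in u..(1/3:ℝ), fn t) (-fn a) a := by
  have ha0 : 0 < a := lt_of_lt_of_le (by positivity) ha
  apply intervalIntegral.integral_hasDerivAt_left
    (fn_integrable ha0 ha3 (by norm_num))
  · have hm : MeasureTheory.StronglyMeasurable fn :=
      ((Real.measurable_log.comp (by fun_prop)).div (by fun_prop)).stronglyMeasurable
    exact hm.stronglyMeasurableAtFilter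
  · exact fn_contAt ha0 (by linarith)

lemma main_mono : AntitoneOn (fun a => a * ∫ t in a..(1/3:ℝ), fn t)
    (Set.Icc (1/(3*Real.exp 1)) (1/3)) := by
  have hG : ∀ a ∈ Set.Icc (1/(3*Real.exp 1)) (1/3:ℝ),
      HasDerivAt (fun a => a * ∫ t in a..(1/3:ℝ), fn t)
        ((∫ t in a..(1/3:ℝ), fn t) + a * (-fn a)) a := by
    intro a ha
    exact (hasDerivAt_id a).mul (F_hasDeriv ha.1 ha.2) |>.congr_deriv (by simp only [id_eq]; ring)
  apply antitoneOn_of_deriv_nonpos (convex_Icc _ _)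
  · exact fun a ha => ((hG a ha).continuousAt).continuousWithinAt
  · intro a ha
    rw [interior_Icc] at ha
    exact ((hG a ⟨le_of_lt ha.1, le_of_lt ha.2⟩).differentiableAt).differentiableWithinAt
  · intro a ha
    rw [interior_Icc] at ha
    rw [(hG a ⟨le_of_lt ha.1, le_of_lt ha.2⟩).deriv]
    have ha0 : 0 < a := lt_of_lt_of_le (by positivity) (le_of_lt ha.1)
    have hkey := key (le_of_lt ha.1) (le_of_lt ha.2)
    have hne1 : a ≠ 0 := ne_of_gt ha0
    have hne2 : (1:ℝ) - a ≠ 0 := by nlinarith [ha.2]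
    have : a * fn a = Real.log (2-3*a) / (1-a) := by
      unfold fn
      field_simp
    nlinarith [hkey, this]

theorem stmt9 (δ : ℝ) (hδ1 : 1 / (3 * Real.exp 1) ≤ δ) (hδ2 : δ < 1 / 3) :
    ∀ x : ℝ, 1 ≤ x → x ≤ 1 / (3 * δ) →
      x * (∫ t in (x * δ)..(1 / 3 : ℝ), Real.log (2 - 3 * t) / (t * (1 - t)))
      ≤ ∫ t in δ..(1 / 3 : ℝ), Real.log (2 - 3 * t) / (t * (1 - t)) := by
  intro x hx1 hx2
  have hδ0 : 0 < δ := lt_of_lt_of_le (by positivity) hδ1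
  have hxδ : x * δ ≤ 1/3 := by
    rw [le_div_iff₀ (by positivity)] at hx2
    nlinarith
  have h1 : δ ∈ Set.Icc (1/(3*Real.exp 1)) (1/3:ℝ) := ⟨hδ1, le_of_lt hδ2⟩
  have h2 : x*δ ∈ Set.Icc (1/(3*Real.exp 1)) (1/3:ℝ) :=
    ⟨le_trans hδ1 (by nlinarith), hxδ⟩
  have hmono := main_mono h1 h2 (by nlinarith : δ ≤ x*δ)
  simp only at hmono
  unfold fn at hmono
  rw [← mul_le_mul_iff_right₀ hδ0]
  calc δ * (x * ∫ t in (x * δ)..(1/3:ℝ), Real.log (2 - 3*t) / (t * (1-t)))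
      = x * δ * ∫ t in (x * δ)..(1/3:ℝ), Real.log (2 - 3*t) / (t * (1-t)) := by ring
    _ ≤ δ * ∫ t in δ..(1/3:ℝ), Real.log (2 - 3*t) / (t * (1-t)) := hmono
end
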